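/- arXiv:1906.05994 — 3 statements merged into one kernel-verified Lean document; each statement's English description precedes it below -/
import Mathlib

section
/- The optimal value of the SVM primal problem equals the optimal value of its dual quadratic program. Precisely: the infimum over all primal-feasible (w, ξ, b) of (1/2)‖w‖² + C·∑_{d=1}^{Γ} ξ_d equals the supremum, over all a ∈ ℝ^Γ satisfying 0 ≤ a_d ≤ C for every d and ∑_{d=1}^{Γ} a_d·l_d = 0, of ∑_{d=1}^{Γ} a_d − (1/2)·∑_{d=1}^{Γ}∑_{d'=1}^{Γ} l_d·l_{d'}·a_d·a_{d'}·⟨φ_d, φ_{d'}⟩. -/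
open RealInnerProductSpace

/-!
Strong duality is Sion's minimax theorem for the Lagrangian
`L(a, (w, b)) = ½‖w‖² + ∑ a_d (1 - l_d (⟪w, φ_d⟫ + b))`, which is affine in the multipliers `a`,
ranging over the compact box `[0, C]^Γ`, and convex in `(w, b)`. For fixed `(w, b)` the best
multipliers (`C` where the margin constraint is violated, `0` elsewhere) turn `L` into the primal
objective at the optimal slacks `ξ_d = max(0, 1 - l_d (⟪w, φ_d⟫ + b))`. For fixed `a`, `L` is
unbounded below in `b` unless `∑ a_d l_d = 0`, and then it is minimized at `w = ∑ a_d l_d φ_d`,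
where it equals the dual objective.
-/

namespace Sion

variable {E F : Type*}
  [TopologicalSpace E] [AddCommGroup E] [Module ℝ E] [IsTopologicalAddGroup E] [ContinuousSMul ℝ E]
  [TopologicalSpace F] [AddCommGroup F] [Module ℝ F] [IsTopologicalAddGroup F] [ContinuousSMul ℝ F]

theorem le_of_forall_exists_ge_of_forall_exists_le {X : Set E} {Y : Set F} {L : E → F → ℝ}
    (ne_X : X.Nonempty) (cX : Convex ℝ X) (kX : IsCompact X) (cY : Convex ℝ Y)
    (hLx : ∀ y ∈ Y, UpperSemicontinuousOn (L · y) X)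
    (hLx' : ∀ y ∈ Y, QuasiconcaveOn ℝ X (L · y))
    (hLy : ∀ x ∈ X, LowerSemicontinuousOn (L x ·) Y)
    (hLy' : ∀ x ∈ X, QuasiconvexOn ℝ Y (L x ·))
    {r s : ℝ} (hr : ∀ y ∈ Y, ∃ x ∈ X, r ≤ L x y) (hs : ∀ x ∈ X, ∃ y ∈ Y, L x y ≤ s) :
    r ≤ s := by
  -- Apply `minimax'` to `-L`, coerced into the complete linear order `EReal`.
  let g : ℝ → EReal := fun t => ((-t : ℝ) : EReal)
  have g_cont : Continuous g := continuous_coe_real_ereal.comp continuous_neg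
  have g_anti : Antitone g := fun s t h => EReal.coe_le_coe_iff.2 (neg_le_neg h)
  have minimax := minimax' (f := fun x y => g (L x y)) ne_X cX kX
    (fun y hy => g_cont.comp_upperSemicontinuousOn_antitone (hLx y hy) g_anti)
    (fun y hy => (hLx' y hy).antitone_comp (g := g) g_anti) cY
    (fun x hx => g_cont.comp_lowerSemicontinuousOn_antitone (hLy x hx) g_anti)
    (fun x hx => (hLy' x hx).antitone_comp (g := g) g_anti)
  have h_inf_sup : g s ≤ ⨅ x ∈ X, ⨆ y ∈ Y, g (L x y) := le_iInf₂ fun x hx => by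
    obtain ⟨y, hy, hxy⟩ := hs x hx
    exact le_iSup₂_of_le y hy (g_anti hxy)
  have h_sup_inf : ⨆ y ∈ Y, ⨅ x ∈ X, g (L x y) ≤ g r := iSup₂_le fun y hy => by
    obtain ⟨x, hx, hxy⟩ := hr y hy
    exact iInf₂_le_of_le x hx (g_anti hxy)
  simpa [g] using (h_inf_sup.trans_eq minimax).trans h_sup_inf

end Sion

section SVM

variable {H : Type*} [NormedAddCommGroup H] [InnerProductSpace ℝ H] {ι : Type*} [Fintype ι]
  (φ : ι → H) (l : ι → ℝ)

noncomputable def svmRepresenter (a : ι → ℝ) : H := ∑ d, (a d * l d) • φ d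

noncomputable def svmLagrangian (a : ι → ℝ) (y : H × ℝ) : ℝ :=
  1 / 2 * ‖y.1‖ ^ 2 + ∑ d, a d * (1 - l d * (⟪y.1, φ d⟫ + y.2))

def svmPrimalValues (C : ℝ) : Set ℝ :=
  {val : ℝ | ∃ (w : H) (ξ : ι → ℝ) (b : ℝ),
    (∀ d, l d * (⟪w, φ d⟫ + b) ≥ 1 - ξ d) ∧ (∀ d, 0 ≤ ξ d) ∧
    val = (1 / 2) * ‖w‖ ^ 2 + C * ∑ d, ξ d}

def svmDualValues (C : ℝ) : Set ℝ :=
  {val : ℝ | ∃ a : ι → ℝ,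
    (∀ d, 0 ≤ a d ∧ a d ≤ C) ∧ (∑ d, a d * l d = 0) ∧
    val = ∑ d, a d - (1 / 2) * ∑ d, ∑ d', l d * l d' * a d * a d' * ⟪φ d, φ d'⟫}

variable {φ l}

theorem inner_svmRepresenter (w : H) (a : ι → ℝ) :
    ⟪w, svmRepresenter φ l a⟫ = ∑ d, a d * l d * ⟪w, φ d⟫ := by
  simp [svmRepresenter, inner_sum, real_inner_smul_right]

theorem norm_svmRepresenter_sq (a : ι → ℝ) :
    ‖svmRepresenter φ l a‖ ^ 2 = ∑ d, ∑ d', l d * l d' * a d * a d' * ⟪φ d, φ d'⟫ := by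
  rw [← real_inner_self_eq_norm_sq, inner_svmRepresenter, svmRepresenter]
  simp only [sum_inner, real_inner_smul_left, Finset.mul_sum]
  exact Finset.sum_congr rfl fun d _ => Finset.sum_congr rfl fun d' _ => by
    rw [real_inner_comm]; ring

theorem svmLagrangian_eq (a : ι → ℝ) (w : H) (b : ℝ) :
    svmLagrangian φ l a (w, b) =
      1 / 2 * ‖w‖ ^ 2 + ∑ d, a d - ⟪w, svmRepresenter φ l a⟫ - b * ∑ d, a d * l d := by
  simp only [svmLagrangian, inner_svmRepresenter, Finset.mul_sum, add_sub_assoc,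
    ← Finset.sum_sub_distrib]
  exact congrArg _ (Finset.sum_congr rfl fun d _ => by ring)

theorem svmLagrangian_representer (a : ι → ℝ) :
    svmLagrangian φ l a (svmRepresenter φ l a, 0) =
      ∑ d, a d - 1 / 2 * ‖svmRepresenter φ l a‖ ^ 2 := by
  rw [svmLagrangian_eq, real_inner_self_eq_norm_sq]
  ring

theorem svmLagrangian_representer_le {a : ι → ℝ} (hal : ∑ d, a d * l d = 0) (y : H × ℝ) :
    svmLagrangian φ l a (svmRepresenter φ l a, 0) ≤ svmLagrangian φ l a y := by
  obtain ⟨w, b⟩ := y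
  rw [svmLagrangian_eq, svmLagrangian_eq, hal, real_inner_self_eq_norm_sq]
  nlinarith [norm_sub_sq_real w (svmRepresenter φ l a), sq_nonneg ‖w - svmRepresenter φ l a‖]

theorem svmLagrangian_le_of_feasible {C : ℝ} {a : ι → ℝ} (ha : ∀ d, 0 ≤ a d ∧ a d ≤ C)
    {w : H} {ξ : ι → ℝ} {b : ℝ} (hfeas : ∀ d, l d * (⟪w, φ d⟫ + b) ≥ 1 - ξ d)
    (hξ : ∀ d, 0 ≤ ξ d) :
    svmLagrangian φ l a (w, b) ≤ 1 / 2 * ‖w‖ ^ 2 + C * ∑ d, ξ d := by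
  rw [svmLagrangian, Finset.mul_sum]
  refine add_le_add le_rfl (Finset.sum_le_sum fun d _ => ?_)
  calc a d * (1 - l d * (⟪w, φ d⟫ + b)) ≤ a d * ξ d :=
        mul_le_mul_of_nonneg_left (by linarith [hfeas d]) (ha d).1
    _ ≤ C * ξ d := mul_le_mul_of_nonneg_right (ha d).2 (hξ d)

theorem svmLagrangian_hinge (C : ℝ) (w : H) (b : ℝ) :
    svmLagrangian φ l (fun d => if 0 < 1 - l d * (⟪w, φ d⟫ + b) then C else 0) (w, b) =
      1 / 2 * ‖w‖ ^ 2 + C * ∑ d, max 0 (1 - l d * (⟪w, φ d⟫ + b)) := by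
  rw [svmLagrangian, Finset.mul_sum]
  congr 1
  refine Finset.sum_congr rfl fun d _ => ?_
  split_ifs with h
  · rw [max_eq_right h.le]
  · rw [max_eq_left (not_lt.1 h), zero_mul, mul_zero]

theorem exists_svmLagrangian_eq {a : ι → ℝ} (hal : ∑ d, a d * l d ≠ 0) (r : ℝ) :
    ∃ y : H × ℝ, svmLagrangian φ l a y = r := by
  refine ⟨(0, (∑ d, a d - r) / ∑ d, a d * l d), ?_⟩
  rw [svmLagrangian_eq]
  field_simp
  simp only [inner_zero_left, norm_zero]
  ring

theorem continuous_svmLagrangian_left (y : H × ℝ) : Continuous (svmLagrangian φ l · y) := by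
  unfold svmLagrangian
  fun_prop

theorem continuous_svmLagrangian_right (a : ι → ℝ) : Continuous (svmLagrangian φ l a) := by
  unfold svmLagrangian
  fun_prop

theorem concaveOn_svmLagrangian_left {s : Set (ι → ℝ)} (hs : Convex ℝ s) (y : H × ℝ) :
    ConcaveOn ℝ s (svmLagrangian φ l · y) := by
  have := ((Fintype.linearCombination ℝ fun d => 1 - l d * (⟪y.1, φ d⟫ + y.2)).concaveOn
    hs).add_const (1 / 2 * ‖y.1‖ ^ 2)
  refine this.congr fun a _ => ?_
  simp [svmLagrangian, Fintype.linearCombination_apply, add_comm]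

theorem convexOn_svmLagrangian_right (a : ι → ℝ) : ConvexOn ℝ Set.univ (svmLagrangian φ l a) := by
  have hsq : ConvexOn ℝ Set.univ fun y : H × ℝ => ‖y.1‖ ^ 2 :=
    ((convexOn_norm convex_univ).pow (fun _ _ => norm_nonneg _) 2).comp_linearMap
      (LinearMap.fst ℝ H ℝ)
  let ℓ : H × ℝ →ₗ[ℝ] ℝ := (innerₛₗ ℝ (svmRepresenter φ l a)).comp (LinearMap.fst ℝ H ℝ) +
    (∑ d, a d * l d) • LinearMap.snd ℝ H ℝ
  have := ((hsq.smul (by norm_num : (0 : ℝ) ≤ 1 / 2)).sub (ℓ.concaveOn convex_univ)).add_const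
    (∑ d, a d)
  refine this.congr fun ⟨w, b⟩ _ => ?_
  simp only [ℓ, svmLagrangian_eq, smul_eq_mul, Pi.add_apply, Pi.sub_apply, LinearMap.add_apply,
    LinearMap.coe_comp, Function.comp_apply, LinearMap.coe_fst, coe_innerₛₗ_apply, real_inner_comm,
    LinearMap.smul_apply, LinearMap.snd_apply]
  ring

theorem le_of_mem_svmDualValues_of_mem_svmPrimalValues {C p q : ℝ}
    (hp : p ∈ svmPrimalValues φ l C) (hq : q ∈ svmDualValues φ l C) : q ≤ p := by
  obtain ⟨w, ξ, b, hfeas, hξ, rfl⟩ := hp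
  obtain ⟨a, ha, hal, rfl⟩ := hq
  rw [← norm_svmRepresenter_sq, ← svmLagrangian_representer]
  exact (svmLagrangian_representer_le hal (w, b)).trans (svmLagrangian_le_of_feasible ha hfeas hξ)

theorem svmPrimalValues_nonempty (C : ℝ) : (svmPrimalValues φ l C).Nonempty :=
  ⟨_, 0, fun _ => 1, 0, fun d => by simp, fun _ => zero_le_one, rfl⟩

theorem svmDualValues_nonempty {C : ℝ} (hC : 0 ≤ C) : (svmDualValues φ l C).Nonempty :=
  ⟨_, 0, fun _ => ⟨le_rfl, hC⟩, by simp, rfl⟩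

theorem sSup_svmDualValues_le_sInf_svmPrimalValues {C : ℝ} (hC : 0 ≤ C) :
    sSup (svmDualValues φ l C) ≤ sInf (svmPrimalValues φ l C) :=
  csSup_le (svmDualValues_nonempty hC) fun _ hq => le_csInf (svmPrimalValues_nonempty C)
    fun _ hp => le_of_mem_svmDualValues_of_mem_svmPrimalValues hp hq

theorem sInf_svmPrimalValues_le_sSup_svmDualValues {C : ℝ} (hC : 0 ≤ C) :
    sInf (svmPrimalValues φ l C) ≤ sSup (svmDualValues φ l C) := by
  have hP : BddBelow (svmPrimalValues φ l C) := ⟨_, fun _ hp =>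
    le_of_mem_svmDualValues_of_mem_svmPrimalValues hp (svmDualValues_nonempty hC).some_mem⟩
  have hD : BddAbove (svmDualValues φ l C) := ⟨_, fun _ hq =>
    le_of_mem_svmDualValues_of_mem_svmPrimalValues (svmPrimalValues_nonempty C).some_mem hq⟩
  have box_convex : Convex ℝ (Set.univ.pi fun _ : ι => Set.Icc 0 C) :=
    convex_pi fun _ _ => convex_Icc 0 C
  refine Sion.le_of_forall_exists_ge_of_forall_exists_le (L := svmLagrangian φ l)
    ⟨0, fun _ _ => ⟨le_rfl, hC⟩⟩ box_convex (isCompact_univ_pi fun _ => isCompact_Icc)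
    convex_univ
    (fun y _ => (continuous_svmLagrangian_left y).upperSemicontinuous.upperSemicontinuousOn _)
    (fun y _ => (concaveOn_svmLagrangian_left box_convex y).quasiconcaveOn)
    (fun a _ => (continuous_svmLagrangian_right a).lowerSemicontinuous.lowerSemicontinuousOn _)
    (fun a _ => (convexOn_svmLagrangian_right a).quasiconvexOn) ?_ ?_
  · rintro ⟨w, b⟩ -
    refine ⟨_, fun d _ => ?_, csInf_le hP ⟨w, fun d => max 0 (1 - l d * (⟪w, φ d⟫ + b)), b,
      fun d => by linarith [le_max_right 0 (1 - l d * (⟪w, φ d⟫ + b))],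
      fun d => le_max_left _ _, svmLagrangian_hinge C w b⟩⟩
    split_ifs <;> simp [hC]
  · intro a ha
    by_cases hal : ∑ d, a d * l d = 0
    · refine ⟨(svmRepresenter φ l a, 0), Set.mem_univ _,
        le_csSup hD ⟨a, fun d => ha d (Set.mem_univ d), hal, ?_⟩⟩
      rw [svmLagrangian_representer, norm_svmRepresenter_sq]
    · obtain ⟨y, hy⟩ := exists_svmLagrangian_eq (φ := φ) hal (sSup (svmDualValues φ l C))
      exact ⟨y, Set.mem_univ y, hy.le⟩

end SVM

theorem svm_primal_dual_value_eq_general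
    (H : Type*) [NormedAddCommGroup H] [InnerProductSpace ℝ H]
    (Γ : ℕ) (φ : Fin Γ → H) (l : Fin Γ → ℝ) (C : ℝ) (hC : 0 ≤ C) :
    sInf {val : ℝ | ∃ (w : H) (ξ : Fin Γ → ℝ) (b : ℝ),
        (∀ d, l d * (⟪w, φ d⟫ + b) ≥ 1 - ξ d) ∧ (∀ d, 0 ≤ ξ d) ∧
        val = (1 / 2) * ‖w‖ ^ 2 + C * ∑ d, ξ d}
      = sSup {val : ℝ | ∃ a : Fin Γ → ℝ,
        (∀ d, 0 ≤ a d ∧ a d ≤ C) ∧ (∑ d, a d * l d = 0) ∧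
        val = ∑ d, a d
          - (1 / 2) * ∑ d, ∑ d', l d * l d' * a d * a d' * ⟪φ d, φ d'⟫} :=
  (sInf_svmPrimalValues_le_sSup_svmDualValues hC).antisymm
    (sSup_svmDualValues_le_sInf_svmPrimalValues hC)

/-- The optimal value of the SVM primal problem equals the optimal value of its
dual quadratic program. -/
theorem svm_primal_dual_value_eq
    (H : Type*) [NormedAddCommGroup H] [InnerProductSpace ℝ H]
    (Γ : ℕ) (hΓ : 0 < Γ) (φ : Fin Γ → H) (l : Fin Γ → ℝ) (C : ℝ) (hC : 0 ≤ C) :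
    sInf {val : ℝ | ∃ (w : H) (ξ : Fin Γ → ℝ) (b : ℝ),
        (∀ d, l d * (⟪w, φ d⟫ + b) ≥ 1 - ξ d) ∧ (∀ d, 0 ≤ ξ d) ∧
        val = (1 / 2) * ‖w‖ ^ 2 + C * ∑ d, ξ d}
      = sSup {val : ℝ | ∃ a : Fin Γ → ℝ,
        (∀ d, 0 ≤ a d ∧ a d ≤ C) ∧ (∑ d, a d * l d = 0) ∧
        val = ∑ d, a d
          - (1 / 2) * ∑ d, ∑ d', l d * l d' * a d * a d' * ⟪φ d, φ d'⟫} :=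
  svm_primal_dual_value_eq_general H Γ φ l C hC
end

section
/- Strong duality holds for the SVM primal problem: computing values in the extended reals, the supremum over all multipliers a, v ∈ ℝ^Γ with a ≥ 0 and v ≥ 0 of the infimum over all (w, ξ, b) ∈ H × ℝ^Γ × ℝ of the Lagrangian L(w, ξ, b; a, v) equals the infimum, over all primal-feasible (w, ξ, b), of the primal objective (1/2)‖w‖² + C·∑_{d=1}^{Γ} ξ_d. -/
/-!
For a convex program `min f` subject to `g i ≤ 0`, the set of strictly dominated
(constraint, objective) values `{(u, t) | ∃ x, g x < u ∧ f x < t}` is open, convex and upward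
closed, and it misses `(0, p)` whenever `p` is below the primal value. A functional separating
`(0, p)` from it is therefore nonnegative on the positive orthant, and Slater's point makes its
objective coefficient positive; normalising that coefficient to one gives Lagrange multipliers
whose dual value is at least `p`. The SVM constraints are affine, `w = 0, ξ = 2, b = 0` is a
Slater point, and weak duality is the termwise inequality `μ i * g i x ≤ 0` on feasible points.
-/

open RealInnerProductSpace Set Filter Topology

lemma nonneg_of_forall_lt_add_mul {a b c : ℝ} (h : ∀ s, 0 ≤ s → c < a + s * b) : 0 ≤ b := by
  by_contra! hb
  have hs : |a - c| / -b * b = -|a - c| := by field_simp [hb.ne]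
  linarith [h (|a - c| / -b) (div_nonneg (abs_nonneg _) (neg_nonneg.2 hb.le)),
    le_abs_self (a - c)]

lemma add_sum_mul_le_of_nonpos {ι : Type*} [Fintype ι] {μ g : ι → ℝ} (hμ : 0 ≤ μ)
    (hg : ∀ i, g i ≤ 0) (y : ℝ) : y + ∑ i, μ i * g i ≤ y :=
  add_le_of_nonpos_right <|
    Finset.sum_nonpos fun i _ => mul_nonpos_of_nonneg_of_nonpos (hμ i) (hg i)

lemma LinearMap.pi_prod_apply_eq_sum_univ {ι R M : Type*} [CommSemiring R] [AddCommMonoid M]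
    [Module R M] [Fintype ι] [DecidableEq ι] (ℓ : (ι → R) × R →ₗ[R] M) (z : (ι → R) × R) :
    ℓ z = ∑ i, z.1 i • ℓ (Pi.single i 1, 0) + z.2 • ℓ (0, 1) := by
  obtain ⟨u, t⟩ := z
  have : (u, t) =
      ∑ i, u i • ((Pi.single i 1 : ι → R), (0 : R)) + t • ((0 : ι → R), (1 : R)) := by
    ext <;> simp [Prod.fst_sum, Prod.snd_sum, Finset.sum_apply, Pi.single_apply]
  conv_lhs => rw [this]
  simp only [map_add, map_sum, map_smul]

section ConvexProgram

variable {E ι : Type*} {f : E → ℝ} {g : ι → E → ℝ}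

variable (f g) in
def strictPerturbationSet : Set ((ι → ℝ) × ℝ) :=
  {z | ∃ x, (∀ i, g i x < z.1 i) ∧ f x < z.2}

lemma isUpperSet_strictPerturbationSet : IsUpperSet (strictPerturbationSet f g) := by
  rintro z z' hzz' ⟨x, hg, hf⟩
  exact ⟨x, fun i => (hg i).trans_le (hzz'.1 i), hf.trans_le hzz'.2⟩

lemma isOpen_strictPerturbationSet [Finite ι] : IsOpen (strictPerturbationSet f g) := by
  have : strictPerturbationSet f g =
      ⋃ x, (⋂ i, {z : (ι → ℝ) × ℝ | g i x < z.1 i}) ∩ {z | f x < z.2} := by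
    ext; simp [strictPerturbationSet]
  rw [this]
  exact isOpen_iUnion fun x => (isOpen_iInter_of_finite fun i =>
    isOpen_lt continuous_const (by fun_prop)).inter (isOpen_lt continuous_const continuous_snd)

variable [AddCommGroup E] [Module ℝ E]

lemma convex_strictPerturbationSet (hf : ConvexOn ℝ univ f) (hg : ∀ i, ConvexOn ℝ univ (g i)) :
    Convex ℝ (strictPerturbationSet f g) := by
  refine convex_iff_forall_pos.2 ?_
  rintro ⟨u, t⟩ ⟨x, hgx, hfx⟩ ⟨u', t'⟩ ⟨x', hgx', hfx'⟩ a b ha hb hab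
  refine ⟨a • x + b • x', fun i => ?_, ?_⟩
  · calc g i (a • x + b • x') ≤ a * g i x + b * g i x' :=
          (hg i).2 (mem_univ x) (mem_univ x') ha.le hb.le hab
      _ < a * u i + b * u' i := by gcongr; exacts [hgx i, hgx' i]
  · calc f (a • x + b • x') ≤ a * f x + b * f x' :=
          hf.2 (mem_univ x) (mem_univ x') ha.le hb.le hab
      _ < a * t + b * t' := by gcongr

theorem exists_lagrange_multipliers_of_slater [Fintype ι] (hf : ConvexOn ℝ univ f)
    (hg : ∀ i, ConvexOn ℝ univ (g i)) {x₀ : E} (hx₀ : ∀ i, g i x₀ < 0) {p : ℝ}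
    (hp : ∀ x, (∀ i, g i x ≤ 0) → p ≤ f x) :
    ∃ μ : ι → ℝ, 0 ≤ μ ∧ ∀ x, p ≤ f x + ∑ i, μ i * g i x := by
  classical
  set S := strictPerturbationSet f g
  have hpS : ((0 : ι → ℝ), p) ∉ S := fun ⟨x, hgx, hfx⟩ => (hp x fun i => (hgx i).le).not_gt hfx
  obtain ⟨ℓ, hℓ⟩ := geometric_hahn_banach_point_open (convex_strictPerturbationSet hf hg)
    isOpen_strictPerturbationSet hpS
  have hcoord : ∀ z, ℓ z = ∑ i, z.1 i * ℓ (Pi.single i 1, 0) + z.2 * ℓ (0, 1) :=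
    ℓ.toLinearMap.pi_prod_apply_eq_sum_univ
  have hvert : ∀ t : ℝ, ℓ (0, t) = t * ℓ (0, 1) := fun t => by
    rw [← smul_eq_mul, ← map_smul, Prod.smul_mk, smul_zero, smul_eq_mul, mul_one]
  have hslater : ((0 : ι → ℝ), f x₀ + 1) ∈ S := ⟨x₀, hx₀, lt_add_one _⟩
  have hmono : ∀ e, 0 ≤ e → 0 ≤ ℓ e := fun e he => nonneg_of_forall_lt_add_mul fun s hs => by
    simpa using hℓ _ (isUpperSet_strictPerturbationSet
      (le_add_of_nonneg_right (smul_nonneg hs he)) hslater)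
  have hm : 0 < ℓ (0, 1) := by
    refine (hmono _ (by simp [Prod.le_def])).lt_of_ne fun h => ?_
    have := hℓ _ hslater
    rw [hvert p, hvert (f x₀ + 1), ← h] at this
    simp at this
  have hlim : ∀ x, ℓ (0, p) ≤ ℓ (fun i => g i x, f x) := by
    intro x
    have hcurve : Continuous fun δ : ℝ => ℓ (fun i => g i x + δ, f x + δ) := by fun_prop
    refine ge_of_tendsto
      (by simpa using (hcurve.tendsto 0).mono_left (nhdsWithin_le_nhds (s := Ioi 0))) ?_
    exact eventually_nhdsWithin_of_forall fun δ hδ =>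
      (hℓ _ ⟨x, fun i => lt_add_of_pos_right _ hδ, lt_add_of_pos_right _ hδ⟩).le
  refine ⟨fun i => ℓ (Pi.single i 1, 0) / ℓ (0, 1), fun i => div_nonneg (hmono _ ?_) hm.le,
    fun x => ?_⟩
  · simp [Prod.le_def, Pi.single_nonneg]
  · have hsum : ∑ i, ℓ (Pi.single i 1, 0) / ℓ (0, 1) * g i x
        = (∑ i, g i x * ℓ (Pi.single i 1, 0)) / ℓ (0, 1) := by
      rw [Finset.sum_div]
      exact Finset.sum_congr rfl fun i _ => by ring
    have := hlim x
    rw [hvert, hcoord (fun i => g i x, f x)] at this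
    rw [hsum, ← sub_le_iff_le_add', le_div_iff₀ hm]
    linarith

end ConvexProgram

section SVM

variable {H ι : Type*} [NormedAddCommGroup H] [InnerProductSpace ℝ H] [Fintype ι]

noncomputable def svmObjective (C : ℝ) (q : H × (ι → ℝ) × ℝ) : ℝ :=
  1 / 2 * ‖q.1‖ ^ 2 + C * ∑ d, q.2.1 d

def svmConstraint (φ : ι → H) (l : ι → ℝ) : ι ⊕ ι → H × (ι → ℝ) × ℝ → ℝ :=
  Sum.elim (fun d q => 1 - q.2.1 d - l d * (⟪q.1, φ d⟫ + q.2.2)) (fun d q => -q.2.1 d)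

omit [Fintype ι] in
lemma svmConstraint_nonpos_iff {φ : ι → H} {l : ι → ℝ} {q : H × (ι → ℝ) × ℝ} :
    (∀ i, svmConstraint φ l i q ≤ 0) ↔
      (∀ d, l d * (⟪q.1, φ d⟫ + q.2.2) ≥ 1 - q.2.1 d) ∧ ∀ d, 0 ≤ q.2.1 d := by
  simp [svmConstraint, Sum.forall]

lemma svmObjective_add_sum_mul_svmConstraint (C : ℝ) (φ : ι → H) (l : ι → ℝ) (a v : ι → ℝ)
    (q : H × (ι → ℝ) × ℝ) :
    svmObjective C q + ∑ i, Sum.elim a v i * svmConstraint φ l i q =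
      1 / 2 * ‖q.1‖ ^ 2 + C * ∑ d, q.2.1 d
        - ∑ d, a d * (l d * (⟪q.1, φ d⟫ + q.2.2) - 1 + q.2.1 d)
        - ∑ d, v d * q.2.1 d := by
  have hmargin : ∀ d, a d * (1 - q.2.1 d - l d * (⟪q.1, φ d⟫ + q.2.2)) =
      -(a d * (l d * (⟪q.1, φ d⟫ + q.2.2) - 1 + q.2.1 d)) := fun d => by ring
  simp only [svmObjective, svmConstraint, Fintype.sum_sum_type, Sum.elim_inl, Sum.elim_inr,
    hmargin, mul_neg, Finset.sum_neg_distrib]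
  ring

lemma convexOn_svmObjective (C : ℝ) : ConvexOn ℝ univ (svmObjective (H := H) (ι := ι) C) := by
  have hnorm : ConvexOn ℝ univ fun q : H × (ι → ℝ) × ℝ => 1 / 2 * ‖q.1‖ ^ 2 :=
    (((convexOn_norm convex_univ).pow (fun _ _ => norm_nonneg _) 2).comp_linearMap
      (LinearMap.fst ℝ H _)).smul (by norm_num)
  have hslack : ConvexOn ℝ univ fun q : H × (ι → ℝ) × ℝ => C * ∑ d, q.2.1 d :=
    ⟨convex_univ, fun x _ y _ a b _ _ _ => le_of_eq <| by
      simp only [Prod.snd_add, Prod.smul_snd, Prod.fst_add, Prod.smul_fst, Pi.add_apply,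
        Pi.smul_apply, smul_eq_mul, Finset.sum_add_distrib, ← Finset.mul_sum]
      ring⟩
  exact hnorm.add hslack

omit [Fintype ι] in
lemma convexOn_svmConstraint (φ : ι → H) (l : ι → ℝ) (i : ι ⊕ ι) :
    ConvexOn ℝ univ (svmConstraint φ l i) := by
  refine ⟨convex_univ, fun x _ y _ a b _ _ hab => le_of_eq ?_⟩
  cases i <;> simp [svmConstraint, inner_add_left, real_inner_smul_left]
  · linear_combination -hab
  · ring

end SVM

theorem svm_lagrangian_strong_duality_general
    (H : Type*) [NormedAddCommGroup H] [InnerProductSpace ℝ H]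
    (Γ : ℕ) (φ : Fin Γ → H) (l : Fin Γ → ℝ) (C : ℝ) :
    (⨆ av : {av : (Fin Γ → ℝ) × (Fin Γ → ℝ) //
        (∀ d, 0 ≤ av.1 d) ∧ (∀ d, 0 ≤ av.2 d)},
      ⨅ p : H × (Fin Γ → ℝ) × ℝ,
        (((1 / 2) * ‖p.1‖ ^ 2 + C * ∑ d, p.2.1 d
          - ∑ d, av.1.1 d * (l d * (⟪p.1, φ d⟫ + p.2.2) - 1 + p.2.1 d)
          - ∑ d, av.1.2 d * p.2.1 d : ℝ) : EReal))
      = ⨅ p : {p : H × (Fin Γ → ℝ) × ℝ //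
          (∀ d, l d * (⟪p.1, φ d⟫ + p.2.2) ≥ 1 - p.2.1 d) ∧
          (∀ d, 0 ≤ p.2.1 d)},
        (((1 / 2) * ‖p.1.1‖ ^ 2 + C * ∑ d, p.1.2.1 d : ℝ) : EReal) := by
  apply le_antisymm
  · refine iSup_le fun ⟨(a, v), ha, hv⟩ => le_iInf fun ⟨q, hq⟩ => (iInf_le _ q).trans ?_
    rw [EReal.coe_le_coe_iff, ← svmObjective_add_sum_mul_svmConstraint]
    exact add_sum_mul_le_of_nonpos (Sum.forall.2 ⟨ha, hv⟩) (svmConstraint_nonpos_iff.2 hq) _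
  · refine EReal.ge_of_forall_gt_iff_ge.1 fun p hp => ?_
    have hfeas : ∀ q, (∀ i, svmConstraint φ l i q ≤ 0) → p ≤ svmObjective C q := fun q hq =>
      EReal.coe_le_coe_iff.1 (le_iInf_iff.1 hp.le ⟨q, svmConstraint_nonpos_iff.1 hq⟩)
    obtain ⟨μ, hμ, hL⟩ := exists_lagrange_multipliers_of_slater (convexOn_svmObjective C)
      (convexOn_svmConstraint φ l) (x₀ := (0, fun _ => 2, 0)) (by simp [svmConstraint]) hfeas
    refine le_iSup_of_le (ι := {av // _})
      ⟨(μ ∘ Sum.inl, μ ∘ Sum.inr), fun d => hμ _, fun d => hμ _⟩ (le_iInf fun q => ?_)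
    rw [EReal.coe_le_coe_iff, ← svmObjective_add_sum_mul_svmConstraint, Sum.elim_comp_inl_inr]
    exact hL q

/-- Strong duality for the SVM primal problem, computed in the extended reals:
the sup over nonnegative multipliers of the inf of the Lagrangian equals the
inf of the primal objective over primal-feasible points. -/
theorem svm_lagrangian_strong_duality
    (H : Type*) [NormedAddCommGroup H] [InnerProductSpace ℝ H]
    (Γ : ℕ) (hΓ : 0 < Γ) (φ : Fin Γ → H) (l : Fin Γ → ℝ) (C : ℝ) (hC : 0 ≤ C) :
    (⨆ av : {av : (Fin Γ → ℝ) × (Fin Γ → ℝ) //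
        (∀ d, 0 ≤ av.1 d) ∧ (∀ d, 0 ≤ av.2 d)},
      ⨅ p : H × (Fin Γ → ℝ) × ℝ,
        (((1 / 2) * ‖p.1‖ ^ 2 + C * ∑ d, p.2.1 d
          - ∑ d, av.1.1 d * (l d * (⟪p.1, φ d⟫ + p.2.2) - 1 + p.2.1 d)
          - ∑ d, av.1.2 d * p.2.1 d : ℝ) : EReal))
      = ⨅ p : {p : H × (Fin Γ → ℝ) × ℝ //
          (∀ d, l d * (⟪p.1, φ d⟫ + p.2.2) ≥ 1 - p.2.1 d) ∧
          (∀ d, 0 ≤ p.2.1 d)},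
        (((1 / 2) * ‖p.1.1‖ ^ 2 + C * ∑ d, p.1.2.1 d : ℝ) : EReal) :=
  svm_lagrangian_strong_duality_general H Γ φ l C
end

section
/- (Correctness of the Benders termination criterion.) Let X ⊆ ℝ^{n₁} be nonempty, c ∈ ℝ^{n₁}, and for each scenario ω ∈ {1,…,S} let p_ω ≥ 0, and let W_ω, T_ω, h_ω, q_ω and Q_ω be as in the two-stage stochastic program, with complete recourse with attainment: for every x ∈ X and every ω there exists y ≥ 0 with W_ω·y = h_ω − T_ω·x achieving q_ωᵀy = Q_ω(x). Let V_ω ⊆ ℝ^{m₂} consist of dual-feasible points (W_ωᵀν ≤ q_ω for all ν ∈ V_ω), and suppose (x̂, θ̂) is an optimal solution of the relaxed master problem, i.e., it is RMP-feasible and its objective cᵀx̂ + ∑_ω p_ω·θ̂_ω is a lower bound for the RMP objective over all RMP-feasible points. If θ̂_ω ≥ Q_ω(x̂) for every ω, then x̂ is optimal for the original problem: cᵀx̂ + ∑_{ω=1}^{S} p_ω·Q_ω(x̂) = inf_{x ∈ X} (cᵀx + ∑_{ω=1}^{S} p_ω·Q_ω(x)). -/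
/-!
Every `x ∈ X` yields the RMP-feasible point `(x, Q(x))`: by weak LP duality each Benders cut
`νᵀ(h_ω − T_ω x)` with `W_ωᵀ ν ≤ q_ω` is bounded by `q_ωᵀ y = Q_ω(x)` for the attaining recourse
`y`. Hence `cᵀx̂ + ∑ p_ω Q_ω(x̂) ≤ cᵀx̂ + ∑ p_ω θ̂_ω ≤ cᵀx + ∑ p_ω Q_ω(x)`, so `x̂` attains the
infimum.
-/

open Matrix

namespace Matrix

theorem dotProduct_mulVec_le_of_transpose_mulVec_le {R m n : Type*} [Fintype m] [Fintype n]
    [CommSemiring R] [PartialOrder R] [IsOrderedRing R] {W : Matrix m n R} {ν : m → R}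
    {q y : n → R} (hν : Wᵀ *ᵥ ν ≤ q) (hy : 0 ≤ y) : ν ⬝ᵥ (W *ᵥ y) ≤ q ⬝ᵥ y := by
  rw [dotProduct_mulVec, ← mulVec_transpose]
  exact dotProduct_le_dotProduct_of_nonneg_right hν hy

end Matrix

theorem benders_termination_correct_general
    (n₁ n₂ m₂ S : ℕ)
    (X : Set (Fin n₁ → ℝ))
    (c : Fin n₁ → ℝ) (p : Fin S → ℝ) (hp : ∀ ω, 0 ≤ p ω)
    (W : Fin S → Matrix (Fin m₂) (Fin n₂) ℝ)
    (T : Fin S → Matrix (Fin m₂) (Fin n₁) ℝ)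
    (h : Fin S → Fin m₂ → ℝ) (q : Fin S → Fin n₂ → ℝ)
    (Q : Fin S → (Fin n₁ → ℝ) → ℝ)
    (hrecourse : ∀ x ∈ X, ∀ ω, ∃ y : Fin n₂ → ℝ,
        0 ≤ y ∧ (W ω).mulVec y = h ω - (T ω).mulVec x ∧ q ω ⬝ᵥ y = Q ω x)
    (V : Fin S → Set (Fin m₂ → ℝ))
    (hV : ∀ ω, ∀ ν ∈ V ω, (W ω)ᵀ.mulVec ν ≤ q ω)
    (xhat : Fin n₁ → ℝ) (θhat : Fin S → ℝ)
    (hxhatX : xhat ∈ X)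
    (hopt : ∀ (x : Fin n₁ → ℝ) (θ : Fin S → ℝ), x ∈ X →
        (∀ ω, ∀ ν ∈ V ω, θ ω ≥ ν ⬝ᵥ (h ω - (T ω).mulVec x)) →
        c ⬝ᵥ xhat + ∑ ω, p ω * θhat ω ≤ c ⬝ᵥ x + ∑ ω, p ω * θ ω)
    (hgap : ∀ ω, θhat ω ≥ Q ω xhat) :
    c ⬝ᵥ xhat + ∑ ω, p ω * Q ω xhat
      = sInf {val : ℝ | ∃ x ∈ X, val = c ⬝ᵥ x + ∑ ω, p ω * Q ω x} := by
  have hcuts : ∀ x ∈ X, ∀ ω, ∀ ν ∈ V ω, Q ω x ≥ ν ⬝ᵥ (h ω - (T ω).mulVec x) := by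
    intro x hx ω ν hν
    obtain ⟨y, hy, hWy, hqy⟩ := hrecourse x hx ω
    rw [← hqy, ← hWy]
    exact dotProduct_mulVec_le_of_transpose_mulVec_le (hV ω ν hν) hy
  have hlower : ∀ x ∈ X, c ⬝ᵥ xhat + ∑ ω, p ω * Q ω xhat ≤ c ⬝ᵥ x + ∑ ω, p ω * Q ω x := by
    intro x hx
    calc c ⬝ᵥ xhat + ∑ ω, p ω * Q ω xhat ≤ c ⬝ᵥ xhat + ∑ ω, p ω * θhat ω := by
          gcongr with ω
          exacts [hp ω, hgap ω]
      _ ≤ c ⬝ᵥ x + ∑ ω, p ω * Q ω x := hopt x (Q · x) hx (hcuts x hx)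
  have hleast : IsLeast {val : ℝ | ∃ x ∈ X, val = c ⬝ᵥ x + ∑ ω, p ω * Q ω x}
      (c ⬝ᵥ xhat + ∑ ω, p ω * Q ω xhat) := by
    refine ⟨⟨xhat, hxhatX, rfl⟩, ?_⟩
    rintro _ ⟨x, hx, rfl⟩
    exact hlower x hx
  exact hleast.csInf_eq.symm

/-- Correctness of the Benders termination criterion: if `(xhat, θhat)` is an
optimal solution of the relaxed master problem and `θhat_ω ≥ Q_ω(xhat)` for every
scenario `ω`, then `xhat` is optimal for the original two-stage problem. -/
theorem benders_termination_correct
    (n₁ n₂ m₂ S : ℕ)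
    (X : Set (Fin n₁ → ℝ)) (hX : X.Nonempty)
    (c : Fin n₁ → ℝ) (p : Fin S → ℝ) (hp : ∀ ω, 0 ≤ p ω)
    (W : Fin S → Matrix (Fin m₂) (Fin n₂) ℝ)
    (T : Fin S → Matrix (Fin m₂) (Fin n₁) ℝ)
    (h : Fin S → Fin m₂ → ℝ) (q : Fin S → Fin n₂ → ℝ)
    (Q : Fin S → (Fin n₁ → ℝ) → ℝ)
    (hQ : ∀ ω x, Q ω x = sInf {val : ℝ | ∃ y : Fin n₂ → ℝ,
        0 ≤ y ∧ (W ω).mulVec y = h ω - (T ω).mulVec x ∧ val = q ω ⬝ᵥ y})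
    (hrecourse : ∀ x ∈ X, ∀ ω, ∃ y : Fin n₂ → ℝ,
        0 ≤ y ∧ (W ω).mulVec y = h ω - (T ω).mulVec x ∧ q ω ⬝ᵥ y = Q ω x)
    (V : Fin S → Set (Fin m₂ → ℝ))
    (hV : ∀ ω, ∀ ν ∈ V ω, (W ω)ᵀ.mulVec ν ≤ q ω)
    (xhat : Fin n₁ → ℝ) (θhat : Fin S → ℝ)
    (hxhatX : xhat ∈ X)
    (hxhatfeas : ∀ ω, ∀ ν ∈ V ω, θhat ω ≥ ν ⬝ᵥ (h ω - (T ω).mulVec xhat))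
    (hopt : ∀ (x : Fin n₁ → ℝ) (θ : Fin S → ℝ), x ∈ X →
        (∀ ω, ∀ ν ∈ V ω, θ ω ≥ ν ⬝ᵥ (h ω - (T ω).mulVec x)) →
        c ⬝ᵥ xhat + ∑ ω, p ω * θhat ω ≤ c ⬝ᵥ x + ∑ ω, p ω * θ ω)
    (hgap : ∀ ω, θhat ω ≥ Q ω xhat) :
    c ⬝ᵥ xhat + ∑ ω, p ω * Q ω xhat
      = sInf {val : ℝ | ∃ x ∈ X, val = c ⬝ᵥ x + ∑ ω, p ω * Q ω x} :=
  benders_termination_correct_general n₁ n₂ m₂ S X c p hp W T h q Q hrecourse V hV xhat θhat hxhatX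
    hopt hgap
end
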